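/- With the coupled outcomes of the previous statement applied at test points x_{n₁+1},…,x_n with independent uniforms, the two-sided test statistic max over a finite set of detectors {h_j} of Σ_i (Y_i − q_{sign(h_j(x_i))}(x_i))·h_j(x_i) is almost surely at most max_j Σ_i (Y_i^{(sign(h_j(x_i)))} − q_{sign(h_j(x_i))}(x_i))·h_j(x_i); hence the bounding Monte Carlo statistic stochastically dominates the true two-sided test statistic under any null distribution with q₋ ≤ p₀ ≤ q₊ pointwise. -/

import Mathlib

open MeasureTheory Finset

/-! Under the null, `q₋(x) ≤ p₀(x) ≤ q₊(x)`, so with a shared uniform `U` the events satisfy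
`{U ≤ q₋(x)} ⊆ {U ≤ p₀(x)} ⊆ {U ≤ q₊(x)}`. Each summand `(Y - q) h` is monotone in `Y` with the
sign of `h`, so replacing `Y` by the coupled outcome on the side of that sign can only increase
it. So `T ≤ T*` holds for every realisation of the uniforms, not just almost surely. -/

lemma ite_le_one_zero_of_le {u a b : ℝ} (hab : a ≤ b) :
    (if u ≤ a then (1 : ℝ) else 0) ≤ if u ≤ b then 1 else 0 := by
  split_ifs with ha hb <;> norm_num
  exact hb (ha.trans hab)

lemma sub_mul_le_sub_ite_mul {y yp ym q c : ℝ} (hyp : y ≤ yp) (hym : ym ≤ y) :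
    (y - q) * c ≤ ((if 0 < c then yp else ym) - q) * c := by
  by_cases hc : 0 < c
  · rw [if_pos hc]
    exact mul_le_mul_of_nonneg_right (by linarith) hc.le
  · rw [if_neg hc]
    exact mul_le_mul_of_nonpos_right (by linarith) (not_lt.mp hc)

lemma sup'_sum_signed_score_le {ι κ : Type*} [Fintype ι] (s : Finset κ) (hs : s.Nonempty)
    (y yp ym qp qm : ι → ℝ) (hyp : y ≤ yp) (hym : ym ≤ y) (h : κ → ι → ℝ) :
    s.sup' hs (fun j => ∑ i, (y i - (if 0 < h j i then qp i else qm i)) * h j i) ≤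
      s.sup' hs (fun j => ∑ i, ((if 0 < h j i then yp i else ym i) -
        (if 0 < h j i then qp i else qm i)) * h j i) :=
  sup'_mono_fun fun _ _ => sum_le_sum fun i _ => sub_mul_le_sub_ite_mul (hyp i) (hym i)

theorem two_sided_coupling_dominance_general {Ω 𝒳 : Type*} [MeasurableSpace Ω] (μ : Measure Ω)
    (n m : ℕ) [NeZero m]
    (U : Fin n → Ω → ℝ)
    (p₀ qm qp : 𝒳 → ℝ)
    (hnull : ∀ z, qm z ≤ p₀ z ∧ p₀ z ≤ qp z)
    (x : Fin n → 𝒳) (h : Fin m → 𝒳 → ℝ)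
    (T Tstar : Ω → ℝ)
    (hT : ∀ ω, T ω = Finset.univ.sup' Finset.univ_nonempty (fun j : Fin m =>
        ∑ i, ((if U i ω ≤ p₀ (x i) then (1 : ℝ) else 0) -
            (if 0 < h j (x i) then qp (x i) else qm (x i))) * h j (x i)))
    (hTstar : ∀ ω, Tstar ω = Finset.univ.sup' Finset.univ_nonempty (fun j : Fin m =>
        ∑ i, ((if 0 < h j (x i) then (if U i ω ≤ qp (x i) then (1 : ℝ) else 0)
              else (if U i ω ≤ qm (x i) then (1 : ℝ) else 0)) -
            (if 0 < h j (x i) then qp (x i) else qm (x i))) * h j (x i))) :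
    (∀ᵐ ω ∂μ, T ω ≤ Tstar ω) ∧ ∀ t : ℝ, μ {ω | t < T ω} ≤ μ {ω | t < Tstar ω} := by
  have hle : ∀ ω, T ω ≤ Tstar ω := fun ω => by
    rw [hT, hTstar]
    exact sup'_sum_signed_score_le univ univ_nonempty _ _ _ (qp ∘ x) (qm ∘ x)
      (fun i => ite_le_one_zero_of_le (hnull (x i)).2)
      (fun i => ite_le_one_zero_of_le (hnull (x i)).1) (fun j i => h j (x i))
  exact ⟨.of_forall hle, fun t => measure_mono fun ω hω => lt_of_lt_of_le hω (hle ω)⟩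

/-- Coupling bound for the two-sided test statistic: with coupled outcomes built from shared
uniforms, the max over a finite family of detectors of the sign-adjusted empirical score with
the true outcomes is a.s. at most the bounding Monte Carlo statistic; hence the latter
stochastically dominates the former under any null with `q₋ ≤ p₀ ≤ q₊` pointwise. -/
theorem two_sided_coupling_dominance {Ω 𝒳 : Type*} [MeasurableSpace Ω] (μ : Measure Ω)
    [IsProbabilityMeasure μ] (n m : ℕ) [NeZero m]
    (U : Fin n → Ω → ℝ) (hUmeas : ∀ i, Measurable (U i))
    (hUnif : ∀ i, ∀ t ∈ Set.Icc (0 : ℝ) 1, μ {ω | U i ω ≤ t} = ENNReal.ofReal t)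
    (hIndep : ProbabilityTheory.iIndepFun U μ)
    (p₀ qm qp : 𝒳 → ℝ)
    (hrange : ∀ z, 0 ≤ qm z ∧ qp z ≤ 1)
    (hnull : ∀ z, qm z ≤ p₀ z ∧ p₀ z ≤ qp z)
    (x : Fin n → 𝒳) (h : Fin m → 𝒳 → ℝ)
    (T Tstar : Ω → ℝ)
    (hT : ∀ ω, T ω = Finset.univ.sup' Finset.univ_nonempty (fun j : Fin m =>
        ∑ i, ((if U i ω ≤ p₀ (x i) then (1 : ℝ) else 0) -
            (if 0 < h j (x i) then qp (x i) else qm (x i))) * h j (x i)))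
    (hTstar : ∀ ω, Tstar ω = Finset.univ.sup' Finset.univ_nonempty (fun j : Fin m =>
        ∑ i, ((if 0 < h j (x i) then (if U i ω ≤ qp (x i) then (1 : ℝ) else 0)
              else (if U i ω ≤ qm (x i) then (1 : ℝ) else 0)) -
            (if 0 < h j (x i) then qp (x i) else qm (x i))) * h j (x i))) :
    (∀ᵐ ω ∂μ, T ω ≤ Tstar ω) ∧ ∀ t : ℝ, μ {ω | t < T ω} ≤ μ {ω | t < Tstar ω} :=
  two_sided_coupling_dominance_general μ n m U p₀ qm qp hnull x h T Tstar hT hTstar
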